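/- Let V be a finite-dimensional ℚ(v,t)-vector space, V_ℤ a ℤ[v^{±1},t^{±1}]-lattice, L₀ a free A-lattice (A = functions regular at v=0) and L_∞ a free Ā-lattice (Ā = functions regular at v=∞), each spanning V over ℚ(v,t). If the natural map E := V_ℤ ∩ L₀ ∩ L_∞ → (V_ℤ ∩ L₀)/(V_ℤ ∩ vL₀) is an isomorphism of ℤ[t^{±1}]-modules, then V_ℤ ∩ L₀ ≅ ℤ[v,t^{±1}] ⊗_{ℤ[t^{±1}]} E, V_ℤ ∩ L_∞ ≅ ℤ[v^{-1},t^{±1}] ⊗_{ℤ[t^{±1}]} E, V_ℤ ≅ ℤ[v^{±1},t^{±1}] ⊗_{ℤ[t^{±1}]} E, and E → (V_ℤ ∩ L_∞)/(V_ℤ ∩ v^{-1}L_∞) is also an isomorphism. -/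

import Mathlib

/- STATEMENT 19 (triangularity lemma): V a finite-dimensional ℚ(v,t)-vector space, V_ℤ a
ℤ[v^{±1},t^{±1}]-lattice, L₀ a free A-lattice (A = functions regular at v=0), L_∞ a free
Ā-lattice (Ā = functions regular at v=∞), each spanning V. If
E := V_ℤ ∩ L₀ ∩ L_∞ → (V_ℤ ∩ L₀)/(V_ℤ ∩ vL₀) is an isomorphism of ℤ[t^{±1}]-modules then
V_ℤ ∩ L₀ ≅ ℤ[v,t^{±1}] ⊗_{ℤ[t^{±1}]} E, V_ℤ ∩ L_∞ ≅ ℤ[v^{-1},t^{±1}] ⊗_{ℤ[t^{±1}]} E,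
V_ℤ ≅ ℤ[v^{±1},t^{±1}] ⊗_{ℤ[t^{±1}]} E, and E → (V_ℤ ∩ L_∞)/(V_ℤ ∩ v^{-1}L_∞) is also an
isomorphism.  The tensor isomorphisms are expressed by exhibiting a common
ℚ(v,t)-linearly independent set S with E, V_ℤ∩L₀, V_ℤ∩L_∞, V_ℤ the spans of S over the
respective coefficient rings. -/

noncomputable section

/-- The field ℚ(t). -/
abbrev FF : Type := RatFunc ℚ
/-- The field ℚ(v,t) = ℚ(t)(v). -/
abbrev KK : Type := RatFunc FF
/-- The variable v. -/
def vv : KK := RatFunc.X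
/-- The variable t. -/
def tt : KK := algebraMap FF KK RatFunc.X

/-- A ⊂ ℚ(v,t): rational functions without pole at v = 0. -/
def Aset : Set KK := {x | ∃ p q : Polynomial FF, Polynomial.eval 0 q ≠ 0 ∧
  x * algebraMap (Polynomial FF) KK q = algebraMap (Polynomial FF) KK p}
/-- Ā ⊂ ℚ(v,t): rational functions without pole at v = ∞. -/
def Abarset : Set KK := {x | ∃ p q : Polynomial FF, q ≠ 0 ∧ p.degree ≤ q.degree ∧
  x * algebraMap (Polynomial FF) KK q = algebraMap (Polynomial FF) KK p}
/-- ℤ[t^{±1}]. -/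
def Tset : Set KK := (Algebra.adjoin ℤ ({tt, tt⁻¹} : Set KK) : Subalgebra ℤ KK)
/-- ℤ[v, t^{±1}]. -/
def Rv : Set KK := (Algebra.adjoin ℤ ({vv, tt, tt⁻¹} : Set KK) : Subalgebra ℤ KK)
/-- ℤ[v^{-1}, t^{±1}]. -/
def Rvinv : Set KK := (Algebra.adjoin ℤ ({vv⁻¹, tt, tt⁻¹} : Set KK) : Subalgebra ℤ KK)
/-- ℤ[v^{±1}, t^{±1}]. -/
def Rlaurent : Set KK := (Algebra.adjoin ℤ ({vv, vv⁻¹, tt, tt⁻¹} : Set KK) : Subalgebra ℤ KK)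

variable {V : Type*} [AddCommGroup V] [Module KK V]

/-- The span of S over a coefficient subring R ⊂ ℚ(v,t), as a subset of V. -/
def rspan (R : Set KK) (S : Set V) : Set V :=
  AddSubgroup.closure {x | ∃ c ∈ R, ∃ s ∈ S, x = c • s}

/-! Iterating the surjectivity of `E := V_ℤ ∩ L₀ ∩ L_∞ → (V_ℤ ∩ L₀)/(V_ℤ ∩ vL₀)` writes
`x ∈ V_ℤ ∩ L₀` as `∑_{i<n} vⁱ eᵢ + vⁿ y`. Since `v^k y ∈ L₀` for some `k`, applying this to `v^k y`
for `y ∈ V_ℤ ∩ L_∞` gives `y = e + ∑_{j ≥ 1} v⁻ʲ eⱼ` with all `eⱼ ∈ E`; this is the statement at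
`v = ∞`, and by the resulting symmetry between `(v, L₀, L_∞)` and `(v⁻¹, L_∞, L₀)`, `E` spans
`V_ℤ ∩ L₀`, `V_ℤ ∩ L_∞` and `V_ℤ` over the corresponding coefficient rings.

A `ℤ[t^{±1}]`-basis of `E` comes from specialising at `v = 1`: `E ∩ (v - 1)V_ℤ = 0` (if
`(v - 1)y ∈ E`, then `y ∈ E` and `vy ∈ E ∩ vL₀`) and `E + (v - 1)V_ℤ = V_ℤ`, so
`E ≅ V_ℤ/(v - 1)V_ℤ`, which is free on the image of a basis of `V_ℤ`. The lifts of that image to `E`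
span `V` and have `dim V` elements, hence are `ℚ(v,t)`-linearly independent. -/

section CoefficientRings

open Polynomial

theorem vv_ne_zero : vv ≠ 0 := RatFunc.X_ne_zero

def Asubalgebra : Subalgebra ℤ KK where
  carrier := Aset
  mul_mem' := by
    rintro a b ⟨p, q, hq, hpq⟩ ⟨p', q', hq', hpq'⟩
    refine ⟨p * p', q * q', by simp [hq, hq'], ?_⟩
    simp only [map_mul]
    linear_combination (b * algebraMap FF[X] KK q') * hpq + algebraMap FF[X] KK p * hpq'
  add_mem' := by
    rintro a b ⟨p, q, hq, hpq⟩ ⟨p', q', hq', hpq'⟩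
    refine ⟨p * q' + p' * q, q * q', by simp [hq, hq'], ?_⟩
    simp only [map_add, map_mul]
    linear_combination algebraMap FF[X] KK q' * hpq + algebraMap FF[X] KK q * hpq'
  algebraMap_mem' n := ⟨n, 1, by simp, by simp⟩

def Abarsubalgebra : Subalgebra ℤ KK where
  carrier := Abarset
  mul_mem' := by
    rintro a b ⟨p, q, hq, hd, hpq⟩ ⟨p', q', hq', hd', hpq'⟩
    refine ⟨p * p', q * q', mul_ne_zero hq hq', ?_, ?_⟩
    · rw [degree_mul, degree_mul]
      exact add_le_add hd hd'
    · simp only [map_mul]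
      linear_combination (b * algebraMap FF[X] KK q') * hpq + algebraMap FF[X] KK p * hpq'
  add_mem' := by
    rintro a b ⟨p, q, hq, hd, hpq⟩ ⟨p', q', hq', hd', hpq'⟩
    refine ⟨p * q' + p' * q, q * q', mul_ne_zero hq hq', ?_, ?_⟩
    · refine (degree_add_le _ _).trans (max_le ?_ ?_) <;> rw [degree_mul, degree_mul]
      · exact add_le_add_left hd _
      · rw [add_comm q.degree]
        exact add_le_add_left hd' _
    · simp only [map_add, map_mul]
      linear_combination algebraMap FF[X] KK q' * hpq + algebraMap FF[X] KK q * hpq'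
  algebraMap_mem' n := ⟨n, 1, one_ne_zero, by simpa using degree_intCast_le n, by simp⟩

theorem exists_pow_mul_mem_Aset (a : KK) : ∃ k : ℕ, vv ^ k * a ∈ Aset := by
  obtain ⟨q, hq, hX⟩ :=
    exists_eq_pow_rootMultiplicity_mul_and_not_dvd a.denom a.denom_ne_zero 0
  generalize a.denom.rootMultiplicity 0 = k at hq
  refine ⟨k, a.num, q, by simpa [X_dvd_iff, coeff_zero_eq_eval_zero] using hX, ?_⟩
  rw [(div_eq_iff (RatFunc.algebraMap_ne_zero a.denom_ne_zero)).mp a.num_div_denom, hq]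
  simp only [vv, C_0, sub_zero, map_mul, map_pow, RatFunc.algebraMap_X]
  ring

theorem exists_inv_pow_mul_mem_Abarset (a : KK) : ∃ k : ℕ, vv⁻¹ ^ k * a ∈ Abarset := by
  refine ⟨a.num.natDegree, a.num, X ^ a.num.natDegree * a.denom,
    mul_ne_zero (pow_ne_zero _ X_ne_zero) a.denom_ne_zero, ?_, ?_⟩
  · rw [degree_mul, degree_X_pow]
    exact degree_le_natDegree.trans
      (le_add_of_nonneg_right (zero_le_degree_iff.mpr a.denom_ne_zero))
  · rw [(div_eq_iff (RatFunc.algebraMap_ne_zero a.denom_ne_zero)).mp a.num_div_denom]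
    simp only [vv, map_mul, map_pow, RatFunc.algebraMap_X]
    rw [mul_mul_mul_comm, ← mul_pow, inv_mul_cancel₀ RatFunc.X_ne_zero, one_pow, one_mul]

theorem vv_mem_Aset : vv ∈ Aset := ⟨X, 1, by simp, by simp [vv]⟩

theorem vv_inv_mem_Abarset : vv⁻¹ ∈ Abarset :=
  ⟨1, X, X_ne_zero, by simp, by simp [vv, RatFunc.X_ne_zero]⟩

theorem algebraMap_mem_Asubalgebra (f : FF) : algebraMap FF KK f ∈ Asubalgebra :=
  ⟨C f, 1, by simp, by simp⟩

theorem algebraMap_mem_Abarsubalgebra (f : FF) : algebraMap FF KK f ∈ Abarsubalgebra :=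
  ⟨C f, 1, one_ne_zero, by simpa using degree_C_le, by simp⟩

theorem Tset_subset_Aset : Tset ⊆ Aset :=
  Algebra.adjoin_le (S := Asubalgebra) <| Set.pair_subset (algebraMap_mem_Asubalgebra _)
    (by rw [tt, ← map_inv₀]; exact algebraMap_mem_Asubalgebra _)

theorem Tset_subset_Abarset : Tset ⊆ Abarset :=
  Algebra.adjoin_le (S := Abarsubalgebra) <| Set.pair_subset (algebraMap_mem_Abarsubalgebra _)
    (by rw [tt, ← map_inv₀]; exact algebraMap_mem_Abarsubalgebra _)

theorem Rv_subset_Aset : Rv ⊆ Aset :=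
  Algebra.adjoin_le (S := Asubalgebra) <|
    Set.insert_subset vv_mem_Aset (Algebra.subset_adjoin.trans Tset_subset_Aset)

theorem Rvinv_subset_Abarset : Rvinv ⊆ Abarset :=
  Algebra.adjoin_le (S := Abarsubalgebra) <|
    Set.insert_subset vv_inv_mem_Abarset (Algebra.subset_adjoin.trans Tset_subset_Abarset)

theorem Tset_subset_Rv : Tset ⊆ Rv := Algebra.adjoin_mono (Set.subset_insert _ _)

theorem Tset_subset_Rvinv : Tset ⊆ Rvinv := Algebra.adjoin_mono (Set.subset_insert _ _)

theorem Rv_subset_Rlaurent : Rv ⊆ Rlaurent :=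
  Algebra.adjoin_mono (Set.insert_subset_insert (Set.subset_insert _ _))

theorem Rvinv_subset_Rlaurent : Rvinv ⊆ Rlaurent := Algebra.adjoin_mono (Set.subset_insert _ _)

theorem Tset_subset_Rlaurent : Tset ⊆ Rlaurent := Tset_subset_Rv.trans Rv_subset_Rlaurent

theorem vv_mem_Rv : vv ∈ Rv := Algebra.subset_adjoin (by simp)

theorem vv_inv_mem_Rvinv : vv⁻¹ ∈ Rvinv := Algebra.subset_adjoin (by simp)

theorem vv_mem_Rlaurent : vv ∈ Rlaurent := Algebra.subset_adjoin (by simp)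

theorem vv_inv_mem_Rlaurent : vv⁻¹ ∈ Rlaurent := Algebra.subset_adjoin (by simp)

theorem exists_eq_add_vv_sub_one_mul {c : KK} (hc : c ∈ Rlaurent) :
    ∃ γ ∈ Tset, ∃ d ∈ Rlaurent, c = γ + (vv - 1) * d := by
  have hT {γ : KK} (h : γ ∈ ({tt, tt⁻¹} : Set KK)) : γ ∈ Tset := Algebra.subset_adjoin h
  induction hc using Algebra.adjoin_induction with
  | mem x hx =>
    rcases hx with rfl | rfl | rfl | rfl
    · exact ⟨1, one_mem _, 1, one_mem _, by ring⟩
    · refine ⟨1, one_mem _, -vv⁻¹, neg_mem vv_inv_mem_Rlaurent, ?_⟩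
      rw [mul_neg, sub_mul, mul_inv_cancel₀ vv_ne_zero]
      ring
    · exact ⟨tt, hT (by simp), 0, zero_mem _, by ring⟩
    · exact ⟨tt⁻¹, hT (by simp), 0, zero_mem _, by ring⟩
  | algebraMap n =>
    exact ⟨algebraMap ℤ KK n, Subalgebra.algebraMap_mem _ n, 0, zero_mem _, by ring⟩
  | add x y _ _ hx hy =>
    obtain ⟨γ, hγ, d, hd, rfl⟩ := hx
    obtain ⟨γ', hγ', d', hd', rfl⟩ := hy
    exact ⟨γ + γ', add_mem hγ hγ', d + d', add_mem hd hd', by ring⟩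
  | mul x y _ hy_mem hx hy =>
    obtain ⟨γ, hγ, d, hd, rfl⟩ := hx
    obtain ⟨γ', hγ', d', hd', rfl⟩ := hy
    refine ⟨γ * γ', mul_mem hγ hγ', γ * d' + d * (γ' + (vv - 1) * d'),
      add_mem (mul_mem (Tset_subset_Rlaurent hγ) hd') (mul_mem hd hy_mem), by ring⟩

end CoefficientRings

open Pointwise

theorem pow_smul_mem_of_smul_mem {α G : Type*} [Monoid α] [AddGroup G] [DistribMulAction α G]
    {M : AddSubgroup G} {c : α} (hM : ∀ x ∈ M, c • x ∈ M) (k : ℕ) {x : G} (hx : x ∈ M) :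
    c ^ k • x ∈ M := by
  induction k with
  | zero => simpa using hx
  | succ k ih => rw [pow_succ', mul_smul]; exact hM _ ih

theorem mem_of_pow_smul_mem {α G : Type*} [Monoid α] [AddCommGroup G] [DistribMulAction α G]
    {M : AddSubgroup G} {c : α} (hM : ∀ x ∈ M, c • x ∈ M) {y : G} (hy : c • y - y ∈ M) {k : ℕ}
    (hk : c ^ k • y ∈ M) : y ∈ M := by
  induction k with
  | zero => simpa using hk
  | succ k ih =>
    refine ih ?_
    have h : c ^ k • y = c ^ (k + 1) • y - c ^ k • (c • y - y) := by
      rw [smul_sub, smul_smul, ← pow_succ, sub_sub_cancel]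
    rw [h]
    exact sub_mem hk (pow_smul_mem_of_smul_mem hM k hy)

def latticeSpan (R : Set KK) (S : Set V) : AddSubgroup V :=
  AddSubgroup.closure {x | ∃ c ∈ R, ∃ s ∈ S, x = c • s}

theorem coe_latticeSpan (R : Set KK) (S : Set V) : (latticeSpan R S : Set V) = rspan R S := rfl

section latticeSpan

variable {R R' : Set KK} {S S' : Set V}

theorem smul_mem_latticeSpan {c : KK} {s : V} (hc : c ∈ R) (hs : s ∈ S) :
    c • s ∈ latticeSpan R S :=
  AddSubgroup.subset_closure ⟨c, hc, s, hs, rfl⟩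

theorem latticeSpan_le {M : AddSubgroup V} (h : ∀ c ∈ R, ∀ s ∈ S, c • s ∈ M) :
    latticeSpan R S ≤ M :=
  (AddSubgroup.closure_le _).mpr fun _ ⟨c, hc, s, hs, hx⟩ => hx ▸ h c hc s hs

theorem latticeSpan_mono (hR : R ⊆ R') (hS : S ⊆ S') : latticeSpan R S ≤ latticeSpan R' S' :=
  latticeSpan_le fun _ hc _ hs => smul_mem_latticeSpan (hR hc) (hS hs)

theorem smul_mem_latticeSpan_of_mul_mem {c : KK} (hc : ∀ r ∈ R, c * r ∈ R) {x : V}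
    (hx : x ∈ latticeSpan R S) : c • x ∈ latticeSpan R S := by
  suffices latticeSpan R S ≤ (latticeSpan R S).comap (DistribSMul.toAddMonoidHom V c) from
    this hx
  exact latticeSpan_le fun r hr s hs => by
    simpa [smul_smul] using smul_mem_latticeSpan (hc r hr) hs

theorem smul_mem_latticeSpan_of_mem (T : Subalgebra ℤ KK) {c : KK} (hc : c ∈ T) {x : V}
    (hx : x ∈ latticeSpan T S) : c • x ∈ latticeSpan T S :=
  smul_mem_latticeSpan_of_mul_mem (fun _ => mul_mem hc) hx

theorem smul_mem_latticeSpan_of_subset (T : Subalgebra ℤ KK) (hR : R ⊆ T) :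
    ∀ c ∈ R, ∀ x ∈ latticeSpan T S, c • x ∈ latticeSpan T S :=
  fun _ hc _ => smul_mem_latticeSpan_of_mem T (hR hc)

theorem subset_latticeSpan (T : Subalgebra ℤ KK) (S : Set V) : S ⊆ latticeSpan T S :=
  fun s hs => by simpa using smul_mem_latticeSpan (one_mem T) hs

theorem latticeSpan_latticeSpan {T R : Subalgebra ℤ KK} (hTR : T ≤ R) (S : Set V) :
    latticeSpan R (latticeSpan T S) = latticeSpan R S :=
  le_antisymm
    (latticeSpan_le fun _ hc _ hx => smul_mem_latticeSpan_of_mem R hc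
      (latticeSpan_mono hTR le_rfl hx))
    (latticeSpan_mono le_rfl (subset_latticeSpan T S))

theorem latticeSpan_le_span : latticeSpan R S ≤ (Submodule.span KK S).toAddSubgroup :=
  latticeSpan_le fun c _ _ hs => Submodule.smul_mem _ c (Submodule.subset_span hs)

theorem exists_pow_smul_mem_latticeSpan (T : Subalgebra ℤ KK) {π : KK} (hπ : π ∈ T)
    (hT : ∀ a : KK, ∃ k : ℕ, π ^ k * a ∈ T) (hS : Submodule.span KK S = ⊤) (x : V) :
    ∃ k : ℕ, π ^ k • x ∈ latticeSpan T S := by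
  have hx : x ∈ Submodule.span KK S := hS ▸ Submodule.mem_top
  induction hx using Submodule.span_induction with
  | mem s hs => exact ⟨0, by simpa using subset_latticeSpan T S hs⟩
  | zero => exact ⟨0, by simp⟩
  | add x y _ _ hx hy =>
    obtain ⟨k, hk⟩ := hx
    obtain ⟨l, hl⟩ := hy
    refine ⟨k + l, ?_⟩
    rw [smul_add, pow_add, mul_smul _ _ y, mul_comm, mul_smul]
    exact add_mem (smul_mem_latticeSpan_of_mem T (pow_mem hπ l) hk)
      (smul_mem_latticeSpan_of_mem T (pow_mem hπ k) hl)
  | smul a x _ hx =>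
    obtain ⟨k, hk⟩ := hx
    obtain ⟨j, hj⟩ := hT a
    refine ⟨j + k, ?_⟩
    rw [pow_add, mul_smul, smul_comm (π ^ k), ← mul_smul]
    exact smul_mem_latticeSpan_of_mem T hj hk

end latticeSpan

/-- `(L, L')` stands for `(L₀, L_∞)` when `π = v` and for `(L_∞, L₀)` when `π = v⁻¹`. -/
structure IsLatticeTriple (π : KK) (Vz L L' : AddSubgroup V) : Prop where
  ne_zero : π ≠ 0
  smul_mem : ∀ x ∈ Vz, π • x ∈ Vz
  inv_smul_mem : ∀ x ∈ Vz, π⁻¹ • x ∈ Vz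
  smul_mem_left : ∀ x ∈ L, π • x ∈ L
  inv_smul_mem_right : ∀ x ∈ L', π⁻¹ • x ∈ L'
  exists_pow_smul_mem_left : ∀ x, ∃ k : ℕ, π ^ k • x ∈ L
  exists_pow_smul_mem_right : ∀ x, ∃ k : ℕ, π⁻¹ ^ k • x ∈ L'

/-- The map `E → (Vz ∩ L)/(Vz ∩ πL)` is surjective. -/
def SurjectsOnReduction (π : KK) (Vz L E : AddSubgroup V) : Prop :=
  ∀ x ∈ Vz ⊓ L, ∃ e ∈ E, x - e ∈ Vz ∧ ∃ l ∈ L, x - e = π • l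

/-- The map `E → (Vz ∩ L)/(Vz ∩ πL)` is injective. -/
def InjectsIntoReduction (π : KK) (L E : AddSubgroup V) : Prop :=
  ∀ e ∈ E, (∃ l ∈ L, e = π • l) → e = 0

namespace IsLatticeTriple

variable {π : KK} {Vz L L' : AddSubgroup V}

theorem symm (h : IsLatticeTriple π Vz L L') : IsLatticeTriple π⁻¹ Vz L' L where
  ne_zero := inv_ne_zero h.ne_zero
  smul_mem := h.inv_smul_mem
  inv_smul_mem := by simpa only [inv_inv] using h.smul_mem
  smul_mem_left := h.inv_smul_mem_right
  inv_smul_mem_right := by simpa only [inv_inv] using h.smul_mem_left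
  exists_pow_smul_mem_left := h.exists_pow_smul_mem_right
  exists_pow_smul_mem_right := by simpa only [inv_inv] using h.exists_pow_smul_mem_left

theorem mem_and_smul_mem_of_mem_latticeSpan (h : IsLatticeTriple π Vz L L') {q : V}
    (hq : q ∈ latticeSpan (Set.range fun j : ℕ => π⁻¹ ^ (j + 1)) (Vz ⊓ L ⊓ L' : AddSubgroup V)) :
    q ∈ Vz ∧ π • q ∈ L' := by
  suffices latticeSpan _ _ ≤ Vz ⊓ L'.comap (DistribSMul.toAddMonoidHom V π) from this hq
  refine latticeSpan_le ?_
  rintro - ⟨j, rfl⟩ e ⟨⟨heVz, -⟩, heL'⟩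
  refine ⟨pow_smul_mem_of_smul_mem h.inv_smul_mem _ heVz, ?_⟩
  show π • π⁻¹ ^ (j + 1) • e ∈ L'
  rw [smul_smul, pow_succ', ← mul_assoc, mul_inv_cancel₀ h.ne_zero, one_mul]
  exact pow_smul_mem_of_smul_mem h.inv_smul_mem_right _ heL'

theorem exists_inv_pow_smul_sub_mem (h : IsLatticeTriple π Vz L L')
    (hs : SurjectsOnReduction π Vz L (Vz ⊓ L ⊓ L')) {x : V} (hx : x ∈ Vz ⊓ L) (n : ℕ) :
    ∃ y ∈ Vz ⊓ L, π⁻¹ ^ n • x - y ∈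
      latticeSpan (Set.range fun j : ℕ => π⁻¹ ^ (j + 1)) (Vz ⊓ L ⊓ L' : AddSubgroup V) := by
  induction n with
  | zero => exact ⟨x, hx, by simp⟩
  | succ n ih =>
    obtain ⟨y, hy, hq⟩ := ih
    obtain ⟨e, he, hyeVz, l, hl, hyel⟩ := hs y hy
    have hlVz : l ∈ Vz := by
      simpa [hyel, inv_smul_smul₀ h.ne_zero] using h.inv_smul_mem _ hyeVz
    refine ⟨l, ⟨hlVz, hl⟩, ?_⟩
    have hsplit : π⁻¹ ^ (n + 1) • x - l = π⁻¹ • (π⁻¹ ^ n • x - y) + π⁻¹ ^ (0 + 1) • e := by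
      rw [zero_add, pow_one, smul_sub, pow_succ', mul_smul, sub_add, ← smul_sub, hyel,
        inv_smul_smul₀ h.ne_zero]
    rw [hsplit]
    refine add_mem (smul_mem_latticeSpan_of_mul_mem ?_ hq) (smul_mem_latticeSpan ⟨0, rfl⟩ he)
    rintro _ ⟨j, rfl⟩
    exact ⟨j + 1, pow_succ' _ _⟩

theorem exists_sub_mem_latticeSpan_of_mem_right (h : IsLatticeTriple π Vz L L')
    (hs : SurjectsOnReduction π Vz L (Vz ⊓ L ⊓ L')) {y : V} (hy : y ∈ Vz ⊓ L') :
    ∃ z ∈ Vz ⊓ L ⊓ L', y - z ∈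
      latticeSpan (Set.range fun j : ℕ => π⁻¹ ^ (j + 1)) (Vz ⊓ L ⊓ L' : AddSubgroup V) := by
  obtain ⟨k, hk⟩ := h.exists_pow_smul_mem_left y
  obtain ⟨z, ⟨hzVz, hzL⟩, hq⟩ :=
    h.exists_inv_pow_smul_sub_mem hs ⟨pow_smul_mem_of_smul_mem h.smul_mem k hy.1, hk⟩ k
  rw [smul_smul, ← mul_pow, inv_mul_cancel₀ h.ne_zero, one_pow, one_smul] at hq
  have hqL' : y - z ∈ L' := by
    simpa [inv_smul_smul₀ h.ne_zero] using
      h.inv_smul_mem_right _ (h.mem_and_smul_mem_of_mem_latticeSpan hq).2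
  have hyL' : y ∈ L' := hy.2
  exact ⟨z, ⟨⟨hzVz, hzL⟩, by simpa using sub_mem hyL' hqL'⟩, hq⟩

theorem surjectsOnReduction_symm (h : IsLatticeTriple π Vz L L')
    (hs : SurjectsOnReduction π Vz L (Vz ⊓ L ⊓ L')) :
    SurjectsOnReduction π⁻¹ Vz L' (Vz ⊓ L ⊓ L') := by
  intro y hy
  obtain ⟨z, hz, hq⟩ := h.exists_sub_mem_latticeSpan_of_mem_right hs hy
  obtain ⟨hqVz, hqL'⟩ := h.mem_and_smul_mem_of_mem_latticeSpan hq
  exact ⟨z, hz, hqVz, π • (y - z), hqL', (inv_smul_smul₀ h.ne_zero _).symm⟩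

theorem injectsIntoReduction_symm (h : IsLatticeTriple π Vz L L')
    (hi : InjectsIntoReduction π L (Vz ⊓ L ⊓ L')) :
    InjectsIntoReduction π⁻¹ L' (Vz ⊓ L ⊓ L') := by
  rintro _ ⟨⟨heVz, heL⟩, -⟩ ⟨l, hl, rfl⟩
  have hlVz : l ∈ Vz := by simpa [smul_inv_smul₀ h.ne_zero] using h.smul_mem _ heVz
  have hlL : l ∈ L := by simpa [smul_inv_smul₀ h.ne_zero] using h.smul_mem_left _ heL
  rw [hi l ⟨⟨hlVz, hlL⟩, hl⟩ ⟨_, heL, (smul_inv_smul₀ h.ne_zero l).symm⟩, smul_zero]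

theorem inf_right_le_latticeSpan (h : IsLatticeTriple π Vz L L')
    (hs : SurjectsOnReduction π Vz L (Vz ⊓ L ⊓ L')) {T : Subalgebra ℤ KK} (hT : π⁻¹ ∈ T) :
    Vz ⊓ L' ≤ latticeSpan T (Vz ⊓ L ⊓ L' : AddSubgroup V) := by
  intro y hy
  obtain ⟨z, hz, hq⟩ := h.exists_sub_mem_latticeSpan_of_mem_right hs hy
  rw [← sub_add_cancel y z]
  refine add_mem (latticeSpan_mono ?_ le_rfl hq) (subset_latticeSpan T _ hz)
  rintro _ ⟨j, rfl⟩
  exact pow_mem hT _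

theorem inf_left_le_latticeSpan (h : IsLatticeTriple π Vz L L')
    (hs : SurjectsOnReduction π Vz L (Vz ⊓ L ⊓ L')) {T : Subalgebra ℤ KK} (hT : π ∈ T) :
    Vz ⊓ L ≤ latticeSpan T (Vz ⊓ L ⊓ L' : AddSubgroup V) := by
  have hs' := h.surjectsOnReduction_symm hs
  rw [inf_right_comm] at hs' ⊢
  exact h.symm.inf_right_le_latticeSpan hs' (by rwa [inv_inv])

theorem inf_left_eq_latticeSpan (h : IsLatticeTriple π Vz L L')
    (hs : SurjectsOnReduction π Vz L (Vz ⊓ L ⊓ L')) {T : Subalgebra ℤ KK} (hT : π ∈ T)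
    (hTVz : ∀ c ∈ T, ∀ x ∈ Vz, c • x ∈ Vz) (hTL : ∀ c ∈ T, ∀ x ∈ L, c • x ∈ L) :
    Vz ⊓ L = latticeSpan T (Vz ⊓ L ⊓ L' : AddSubgroup V) :=
  le_antisymm (h.inf_left_le_latticeSpan hs hT)
    (latticeSpan_le fun c hc _ hx => ⟨hTVz c hc _ hx.1.1, hTL c hc _ hx.1.2⟩)

theorem inf_right_eq_latticeSpan (h : IsLatticeTriple π Vz L L')
    (hs : SurjectsOnReduction π Vz L (Vz ⊓ L ⊓ L')) {T : Subalgebra ℤ KK} (hT : π⁻¹ ∈ T)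
    (hTVz : ∀ c ∈ T, ∀ x ∈ Vz, c • x ∈ Vz) (hTL' : ∀ c ∈ T, ∀ x ∈ L', c • x ∈ L') :
    Vz ⊓ L' = latticeSpan T (Vz ⊓ L ⊓ L' : AddSubgroup V) :=
  le_antisymm (h.inf_right_le_latticeSpan hs hT)
    (latticeSpan_le fun c hc _ hx => ⟨hTVz c hc _ hx.1.1, hTL' c hc _ hx.2⟩)

theorem eq_latticeSpan (h : IsLatticeTriple π Vz L L')
    (hs : SurjectsOnReduction π Vz L (Vz ⊓ L ⊓ L')) {T : Subalgebra ℤ KK} (hT : π ∈ T)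
    (hT' : π⁻¹ ∈ T) (hTVz : ∀ c ∈ T, ∀ x ∈ Vz, c • x ∈ Vz) :
    Vz = latticeSpan T (Vz ⊓ L ⊓ L' : AddSubgroup V) := by
  refine le_antisymm (fun x hx => ?_) (latticeSpan_le fun c hc _ hx => hTVz c hc _ hx.1.1)
  obtain ⟨k, hk⟩ := h.exists_pow_smul_mem_left x
  have hkx := h.inf_left_le_latticeSpan hs hT ⟨pow_smul_mem_of_smul_mem h.smul_mem k hx, hk⟩
  have := smul_mem_latticeSpan_of_mem T (pow_mem hT' k) hkx
  rwa [smul_smul, ← mul_pow, inv_mul_cancel₀ h.ne_zero, one_pow, one_smul] at this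

theorem disjoint_sub_one_smul (h : IsLatticeTriple π Vz L L')
    (hi : InjectsIntoReduction π L (Vz ⊓ L ⊓ L')) : Disjoint (Vz ⊓ L ⊓ L') ((π - 1) • Vz) := by
  refine AddSubgroup.disjoint_def.mpr fun hw hw' => ?_
  obtain ⟨y, hy, rfl⟩ := (AddSubgroup.mem_smul_pointwise_iff_exists _ _ _).mp hw'
  rw [sub_smul, one_smul] at hw ⊢
  obtain ⟨k, hk⟩ := h.exists_pow_smul_mem_left y
  obtain ⟨k', hk'⟩ := h.exists_pow_smul_mem_right y
  have hyL : y ∈ L := mem_of_pow_smul_mem h.smul_mem_left hw.1.2 hk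
  have hw' : π⁻¹ • y - y = -(π⁻¹ • (π • y - y)) := by
    rw [smul_sub, inv_smul_smul₀ h.ne_zero, neg_sub]
  have hyL' : y ∈ L' :=
    mem_of_pow_smul_mem h.inv_smul_mem_right (hw' ▸ neg_mem (h.inv_smul_mem_right _ hw.2)) hk'
  have hπy : π • y ∈ Vz ⊓ L ⊓ L' := by simpa using add_mem hw ⟨⟨hy, hyL⟩, hyL'⟩
  rw [(smul_eq_zero.mp (hi _ hπy ⟨y, hyL, rfl⟩)).resolve_left h.ne_zero, smul_zero, sub_zero]

end IsLatticeTriple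

theorem Module.Basis.repr_mem_of_mem_latticeSpan {ι : Type*} (b : Module.Basis ι KK V)
    (Λ : Subalgebra ℤ KK) {x : V} (hx : x ∈ latticeSpan Λ (Set.range b)) (i : ι) :
    b.repr x i ∈ Λ := by
  classical
  induction hx using AddSubgroup.closure_induction with
  | mem _ hy =>
    obtain ⟨c, hc, _, ⟨j, rfl⟩, rfl⟩ := hy
    rw [map_smul, Finsupp.smul_apply, b.repr_self, Finsupp.single_apply]
    split_ifs
    · simpa using hc
    · simp
  | zero => simp
  | add _ _ _ _ hx hy => simpa using add_mem hx hy
  | neg _ _ hx => simpa using neg_mem hx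

section Specialization

variable {T Λ : Subalgebra ℤ KK} {u : KK} {E : AddSubgroup V}

theorem latticeSpan_le_sup_smul (hdecomp : ∀ c ∈ Λ, ∃ γ ∈ T, ∃ d ∈ Λ, c = γ + u * d)
    (hET : ∀ c ∈ T, ∀ x ∈ E, c • x ∈ E) {M : AddSubgroup V}
    (hM : ∀ c ∈ Λ, ∀ x ∈ M, c • x ∈ M) (hEM : E ≤ M) : latticeSpan Λ E ≤ E ⊔ u • M := by
  refine latticeSpan_le fun c hc s hs => ?_
  obtain ⟨γ, hγ, d, hd, rfl⟩ := hdecomp c hc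
  rw [add_smul, mul_smul]
  exact add_mem (AddSubgroup.mem_sup_left (hET γ hγ s hs))
    (AddSubgroup.mem_sup_right (AddSubgroup.smul_mem_pointwise_smul _ u M (hM d hd s (hEM hs))))

theorem le_latticeSpan_of_sub_mem_smul {ι : Type*} [Fintype ι] (b : Module.Basis ι KK V)
    (hTΛ : T ≤ Λ) (hdecomp : ∀ c ∈ Λ, ∃ γ ∈ T, ∃ d ∈ Λ, c = γ + u * d)
    (hET : ∀ c ∈ T, ∀ x ∈ E, c • x ∈ E) (hEM : E ≤ latticeSpan Λ (Set.range b))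
    (hdisj : Disjoint E (u • latticeSpan Λ (Set.range b))) {F : ι → V} (hFE : ∀ i, F i ∈ E)
    (hFM : ∀ i, b i - F i ∈ u • latticeSpan Λ (Set.range b)) :
    E ≤ latticeSpan T (Set.range F) := by
  intro e he
  choose γ hγ d hd hcd using fun i => hdecomp _ (b.repr_mem_of_mem_latticeSpan Λ (hEM he) i)
  have huM : ∀ c ∈ Λ, ∀ x ∈ u • latticeSpan Λ (Set.range b),
      c • x ∈ u • latticeSpan Λ (Set.range b) := by
    intro c hc x hx
    obtain ⟨y, hy, rfl⟩ := (AddSubgroup.mem_smul_pointwise_iff_exists _ _ _).mp hx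
    rw [smul_comm]
    exact AddSubgroup.smul_mem_pointwise_smul _ _ _ (smul_mem_latticeSpan_of_mem Λ hc hy)
  have hsplit : e - ∑ i, γ i • F i = ∑ i, (u • d i • b i + γ i • (b i - F i)) := by
    conv_lhs => rw [← b.sum_repr e]
    rw [← Finset.sum_sub_distrib]
    refine Finset.sum_congr rfl fun i _ => ?_
    rw [hcd i, add_smul, mul_smul, smul_sub]
    abel
  have hsum : ∑ i, γ i • F i ∈ E := sum_mem fun i _ => hET _ (hγ i) _ (hFE i)
  have hdiff : e - ∑ i, γ i • F i = 0 := by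
    refine AddSubgroup.disjoint_def.mp hdisj (sub_mem he hsum) ?_
    rw [hsplit]
    exact sum_mem fun i _ => add_mem
      (AddSubgroup.smul_mem_pointwise_smul _ _ _ (smul_mem_latticeSpan (hd i) ⟨i, rfl⟩))
      (huM _ (hTΛ (hγ i)) _ (hFM i))
  rw [sub_eq_zero.mp hdiff]
  exact sum_mem fun i _ => smul_mem_latticeSpan (hγ i) ⟨i, rfl⟩

theorem exists_linearIndependent_eq_latticeSpan {B : Set V} [Finite B]
    (hB : LinearIndependent KK (fun x : B => (x : V))) (hB_span : Submodule.span KK B = ⊤)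
    (hTΛ : T ≤ Λ) (hdecomp : ∀ c ∈ Λ, ∃ γ ∈ T, ∃ d ∈ Λ, c = γ + u * d)
    (hET : ∀ c ∈ T, ∀ x ∈ E, c • x ∈ E) (hEM : E ≤ latticeSpan Λ B)
    (hspan : latticeSpan Λ B ≤ latticeSpan Λ E) (hdisj : Disjoint E (u • latticeSpan Λ B)) :
    ∃ S : Set V, LinearIndependent KK (fun x : S => (x : V)) ∧ E = latticeSpan T S := by
  have := Fintype.ofFinite B
  let b := Module.Basis.mk hB (by simpa using hB_span.ge)
  have hb : Set.range b = B := by simp [b]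
  rw [← hb] at hEM hspan hdisj
  have hbE : ∀ i, b i ∈ latticeSpan Λ E := fun i => hspan (subset_latticeSpan Λ _ ⟨i, rfl⟩)
  have hlift : ∀ i, ∃ f ∈ E, b i - f ∈ u • latticeSpan Λ (Set.range b) := fun i => by
    obtain ⟨f, hf, z, hz, hfz⟩ := AddSubgroup.mem_sup.mp <| latticeSpan_le_sup_smul hdecomp hET
      (fun c hc _ => smul_mem_latticeSpan_of_mem Λ hc) hEM (hbE i)
    exact ⟨f, hf, by rwa [← hfz, add_sub_cancel_left]⟩
  choose F hFE hFM using hlift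
  have hE : E = latticeSpan T (Set.range F) :=
    le_antisymm (le_latticeSpan_of_sub_mem_smul b hTΛ hdecomp hET hEM hdisj hFE hFM)
      (latticeSpan_le fun c hc _ ⟨i, hi⟩ => hi ▸ hET c hc _ (hFE i))
  have hEF : Submodule.span KK E ≤ Submodule.span KK (Set.range F) :=
    Submodule.span_le.mpr fun _ he => latticeSpan_le_span (hE ▸ he)
  have hF : LinearIndependent KK F := by
    refine linearIndependent_of_top_le_span_of_card_eq_finrank ?_
      (Module.finrank_eq_card_basis b).symm
    rw [← b.span_eq, Submodule.span_le]
    rintro _ ⟨i, rfl⟩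
    exact hEF (latticeSpan_le_span (hbE i))
  exact ⟨Set.range F, (linearIndepOn_id_range_iff hF.injective).mpr hF, hE⟩

end Specialization

theorem isLatticeTriple_vv (Sz : Set V) {S0 Si : Set V} (hS0 : Submodule.span KK S0 = ⊤)
    (hSi : Submodule.span KK Si = ⊤) :
    IsLatticeTriple vv (latticeSpan Rlaurent Sz) (latticeSpan Aset S0)
      (latticeSpan Abarset Si) where
  ne_zero := vv_ne_zero
  smul_mem _ := smul_mem_latticeSpan_of_mem _ vv_mem_Rlaurent
  inv_smul_mem _ := smul_mem_latticeSpan_of_mem _ vv_inv_mem_Rlaurent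
  smul_mem_left _ := smul_mem_latticeSpan_of_mem Asubalgebra vv_mem_Aset
  inv_smul_mem_right _ := smul_mem_latticeSpan_of_mem Abarsubalgebra vv_inv_mem_Abarset
  exists_pow_smul_mem_left :=
    exists_pow_smul_mem_latticeSpan Asubalgebra vv_mem_Aset exists_pow_mul_mem_Aset hS0
  exists_pow_smul_mem_right := exists_pow_smul_mem_latticeSpan Abarsubalgebra
    vv_inv_mem_Abarset exists_inv_pow_mul_mem_Abarset hSi

theorem triangularity_lemma_general
    -- the three lattices, each generated (freely, over its coefficient ring) by a
    -- ℚ(v,t)-basis of V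
    (Vz L0 Linf : Set V)
    (hVz : ∃ S : Finset V, LinearIndependent KK (fun x : (S : Set V) => (x : V)) ∧
      Submodule.span KK (S : Set V) = ⊤ ∧ Vz = rspan Rlaurent (S : Set V))
    (hL0 : ∃ S : Finset V, LinearIndependent KK (fun x : (S : Set V) => (x : V)) ∧
      Submodule.span KK (S : Set V) = ⊤ ∧ L0 = rspan Aset (S : Set V))
    (hLinf : ∃ S : Finset V, LinearIndependent KK (fun x : (S : Set V) => (x : V)) ∧
      Submodule.span KK (S : Set V) = ⊤ ∧ Linf = rspan Abarset (S : Set V))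
    -- hypothesis: E = V_ℤ ∩ L₀ ∩ L_∞ → (V_ℤ ∩ L₀)/(V_ℤ ∩ vL₀) is an isomorphism
    (hsurj : ∀ x ∈ Vz ∩ L0, ∃ e ∈ Vz ∩ L0 ∩ Linf,
      x - e ∈ Vz ∩ {m | ∃ l ∈ L0, m = vv • l})
    (hinj : ∀ e ∈ Vz ∩ L0 ∩ Linf, e ∈ {m | ∃ l ∈ L0, m = vv • l} → e = 0) :
    -- conclusions: a common basis S realizing all the base-change isomorphisms
    (∃ S : Set V, LinearIndependent KK (fun x : S => (x : V)) ∧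
      Vz ∩ L0 ∩ Linf = rspan Tset S ∧
      Vz ∩ L0 = rspan Rv S ∧
      Vz ∩ Linf = rspan Rvinv S ∧
      Vz = rspan Rlaurent S) ∧
    -- and E → (V_ℤ ∩ L_∞)/(V_ℤ ∩ v^{-1}L_∞) is an isomorphism
    (∀ x ∈ Vz ∩ Linf, ∃ e ∈ Vz ∩ L0 ∩ Linf,
      x - e ∈ Vz ∩ {m | ∃ l ∈ Linf, m = vv⁻¹ • l}) ∧
    (∀ e ∈ Vz ∩ L0 ∩ Linf, e ∈ {m | ∃ l ∈ Linf, m = vv⁻¹ • l} → e = 0) := by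
  obtain ⟨Sz, hSz_li, hSz_span, rfl⟩ := hVz
  obtain ⟨S0, -, hS0_span, rfl⟩ := hL0
  obtain ⟨Si, -, hSi_span, rfl⟩ := hLinf
  set Vz := latticeSpan Rlaurent (Sz : Set V)
  set L0 := latticeSpan Aset (S0 : Set V)
  set Linf := latticeSpan Abarset (Si : Set V)
  have h : IsLatticeTriple vv Vz L0 Linf := isLatticeTriple_vv _ hS0_span hSi_span
  have hs : SurjectsOnReduction vv Vz L0 (Vz ⊓ L0 ⊓ Linf) := hsurj
  have hi : InjectsIntoReduction vv L0 (Vz ⊓ L0 ⊓ Linf) := hinj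
  have hET : ∀ c ∈ Tset, ∀ x ∈ Vz ⊓ L0 ⊓ Linf, c • x ∈ Vz ⊓ L0 ⊓ Linf := fun c hc x hx =>
    ⟨⟨smul_mem_latticeSpan_of_subset _ Tset_subset_Rlaurent c hc x hx.1.1,
      smul_mem_latticeSpan_of_subset Asubalgebra Tset_subset_Aset c hc x hx.1.2⟩,
      smul_mem_latticeSpan_of_subset Abarsubalgebra Tset_subset_Abarset c hc x hx.2⟩
  have hVz_eq := h.eq_latticeSpan hs vv_mem_Rlaurent vv_inv_mem_Rlaurent
    (smul_mem_latticeSpan_of_subset _ subset_rfl)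
  obtain ⟨S, hS_li, hES⟩ := exists_linearIndependent_eq_latticeSpan hSz_li hSz_span
    Tset_subset_Rlaurent (fun _ => exists_eq_add_vv_sub_one_mul) hET
    (inf_le_left.trans inf_le_left) hVz_eq.le (h.disjoint_sub_one_smul hi)
  have hspan_S : ∀ R : Subalgebra ℤ KK, Tset ⊆ R →
      latticeSpan R (Vz ⊓ L0 ⊓ Linf : AddSubgroup V) = latticeSpan R S :=
    fun R hR => hES ▸ latticeSpan_latticeSpan hR S
  refine ⟨⟨S, hS_li, congrArg SetLike.coe hES, ?_, ?_, ?_⟩, h.surjectsOnReduction_symm hs,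
    h.injectsIntoReduction_symm hi⟩
  all_goals simp only [← coe_latticeSpan, ← AddSubgroup.coe_inf, SetLike.coe_set_eq]
  · exact (h.inf_left_eq_latticeSpan hs vv_mem_Rv
      (smul_mem_latticeSpan_of_subset _ Rv_subset_Rlaurent)
      (smul_mem_latticeSpan_of_subset Asubalgebra Rv_subset_Aset)).trans (hspan_S _ Tset_subset_Rv)
  · exact (h.inf_right_eq_latticeSpan hs vv_inv_mem_Rvinv
      (smul_mem_latticeSpan_of_subset _ Rvinv_subset_Rlaurent)
      (smul_mem_latticeSpan_of_subset Abarsubalgebra Rvinv_subset_Abarset)).trans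
      (hspan_S _ Tset_subset_Rvinv)
  · exact hVz_eq.trans (hspan_S _ Tset_subset_Rlaurent)

theorem triangularity_lemma [FiniteDimensional KK V]
    -- the three lattices, each generated (freely, over its coefficient ring) by a
    -- ℚ(v,t)-basis of V
    (Vz L0 Linf : Set V)
    (hVz : ∃ S : Finset V, LinearIndependent KK (fun x : (S : Set V) => (x : V)) ∧
      Submodule.span KK (S : Set V) = ⊤ ∧ Vz = rspan Rlaurent (S : Set V))
    (hL0 : ∃ S : Finset V, LinearIndependent KK (fun x : (S : Set V) => (x : V)) ∧
      Submodule.span KK (S : Set V) = ⊤ ∧ L0 = rspan Aset (S : Set V))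
    (hLinf : ∃ S : Finset V, LinearIndependent KK (fun x : (S : Set V) => (x : V)) ∧
      Submodule.span KK (S : Set V) = ⊤ ∧ Linf = rspan Abarset (S : Set V))
    -- hypothesis: E = V_ℤ ∩ L₀ ∩ L_∞ → (V_ℤ ∩ L₀)/(V_ℤ ∩ vL₀) is an isomorphism
    (hsurj : ∀ x ∈ Vz ∩ L0, ∃ e ∈ Vz ∩ L0 ∩ Linf,
      x - e ∈ Vz ∩ {m | ∃ l ∈ L0, m = vv • l})
    (hinj : ∀ e ∈ Vz ∩ L0 ∩ Linf, e ∈ {m | ∃ l ∈ L0, m = vv • l} → e = 0) :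
    -- conclusions: a common basis S realizing all the base-change isomorphisms
    (∃ S : Set V, LinearIndependent KK (fun x : S => (x : V)) ∧
      Vz ∩ L0 ∩ Linf = rspan Tset S ∧
      Vz ∩ L0 = rspan Rv S ∧
      Vz ∩ Linf = rspan Rvinv S ∧
      Vz = rspan Rlaurent S) ∧
    -- and E → (V_ℤ ∩ L_∞)/(V_ℤ ∩ v^{-1}L_∞) is an isomorphism
    (∀ x ∈ Vz ∩ Linf, ∃ e ∈ Vz ∩ L0 ∩ Linf,
      x - e ∈ Vz ∩ {m | ∃ l ∈ Linf, m = vv⁻¹ • l}) ∧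
    (∀ e ∈ Vz ∩ L0 ∩ Linf, e ∈ {m | ∃ l ∈ Linf, m = vv⁻¹ • l} → e = 0) :=
  triangularity_lemma_general Vz L0 Linf hVz hL0 hLinf hsurj hinj
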